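/- arXiv:1812.04925 — 4 statements merged into one kernel-verified Lean document; each statement's English description precedes it below -/
import Mathlib

section
/- Let λ be a frequency, (a_n) complex coefficients, and suppose the series ∑_n a_n e^{−λ_n s₀} converges (its partial sums converge) for some s₀ ∈ ℂ. Then for every σ > max(0, Re s₀) and every k ≥ 0, the function ℝ → ℂ given by x ↦ e^{−σx} · ∑_{n : λ_n < x} a_n (x − λ_n)^k (the finite sum, equal to 0 when no λ_n < x) is integrable on ℝ (i.e. belongs to L¹(ℝ)). -/
/-!
The partial sums `∑_{n ≤ N} a_n e^{-λ_n s₀}` converge, hence are bounded by some `C`. Writing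
`a_n (x - λ_n)^k = w(λ_n) · a_n e^{-λ_n s₀}` with the weight `w(t) = e^{t s₀} (x - t)^k` and
summing by parts over the `λ_n < x`, the Riesz sum is at most `C` times `‖w‖` at the last point
plus the variation of `w` along `0 ≤ λ_1 < λ_2 < ⋯ < x`. Splitting `w` into its two factors, that
variation is at most `e^{max(0, Re s₀) x} x^k (1 + ‖s₀‖ x)`. After multiplication by `e^{-σx}` the
Riesz sum is thus `O((x^k + x^{k+1}) e^{-(σ - max(0, Re s₀)) x})` on `(0, ∞)`, which is integrable,
and it vanishes for `x ≤ 0` because `λ_1 ≥ 0`.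
-/

open Filter Finset Complex MeasureTheory Topology

/-- Partial sum `S_N(s) = ∑_{n=1}^N a_n e^{−λ_n s}` of a general Dirichlet series. -/
noncomputable def partialSum (lam : ℕ → ℝ) (a : ℕ → ℂ) (N : ℕ) (s : ℂ) : ℂ :=
  ∑ n ∈ Finset.Icc 1 N, a n * Complex.exp (-(lam n : ℂ) * s)

/-- A frequency: strictly increasing (indexed from 1), nonnegative, tending to infinity. -/
def IsFrequency (lam : ℕ → ℝ) : Prop :=
  (∀ n : ℕ, 1 ≤ n → lam n < lam (n + 1)) ∧ 0 ≤ lam 1 ∧ Tendsto lam atTop atTop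

/-- `(a_n)` belongs to `D∞^ext(λ)` with extension `f` and bound `M`. -/
def MemDExt (lam : ℕ → ℝ) (a : ℕ → ℂ) (f : ℂ → ℂ) (M : ℝ) : Prop :=
  (∃ σ₀ : ℝ,
    (∀ s : ℂ, σ₀ < s.re →
      ∃ L : ℂ, Tendsto (fun N => partialSum lam a N s) atTop (nhds L)) ∧
    (∀ s : ℂ, max σ₀ 0 < s.re →
      Tendsto (fun N => partialSum lam a N s) atTop (nhds (f s)))) ∧
  DifferentiableOn ℂ f {s : ℂ | 0 < s.re} ∧
  (∀ s : ℂ, 0 < s.re → ‖f s‖ ≤ M)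

lemma norm_sum_range_succ_smul_le {R M : Type*} [SeminormedRing R] [SeminormedAddCommGroup M]
    [Module R M] [IsBoundedSMul R M] (f : ℕ → R) (g : ℕ → M) {C : ℝ}
    (hg : ∀ n, ‖∑ i ∈ range n, g i‖ ≤ C) (n : ℕ) :
    ‖∑ i ∈ range (n + 1), f i • g i‖ ≤ C * (‖f n‖ + ∑ i ∈ range n, ‖f (i + 1) - f i‖) := by
  have hsmul (r : R) (m : ℕ) : ‖r • ∑ i ∈ range m, g i‖ ≤ ‖r‖ * C :=
    (norm_smul_le _ _).trans (mul_le_mul_of_nonneg_left (hg m) (norm_nonneg r))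
  rw [sum_range_by_parts, Nat.add_sub_cancel, mul_add, mul_sum]
  refine (norm_sub_le _ _).trans
    (add_le_add ?_ ((norm_sum_le _ _).trans (sum_le_sum fun i _ => ?_))) <;>
  rw [mul_comm] <;> exact hsmul _ _

lemma norm_cexp_ofReal_mul_le {s : ℂ} {t x : ℝ} (ht : 0 ≤ t) (htx : t ≤ x) :
    ‖Complex.exp (t * s)‖ ≤ Real.exp (max 0 s.re * x) := by
  rw [Complex.norm_exp, Real.exp_le_exp, re_ofReal_mul]
  nlinarith [le_max_left 0 s.re, le_max_right 0 s.re]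

lemma norm_cexp_ofReal_mul_sub_le {s : ℂ} {u v : ℝ} (hu : 0 ≤ u) (huv : u ≤ v) :
    ‖Complex.exp (v * s) - Complex.exp (u * s)‖ ≤
      Real.exp (max 0 s.re * v) * ‖s‖ * (v - u) := by
  have hderiv (t : ℝ) :
      HasDerivAt (fun t : ℝ => Complex.exp (t * s)) (Complex.exp (t * s) * s) t :=
    ((hasDerivAt_id (t : ℂ)).comp_ofReal.mul_const s |>.cexp).congr_deriv (by simp)
  have hbound (t : ℝ) (ht : t ∈ Set.Icc u v) :
      ‖Complex.exp (t * s) * s‖ ≤ Real.exp (max 0 s.re * v) * ‖s‖ := by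
    rw [norm_mul]
    exact mul_le_mul_of_nonneg_right (norm_cexp_ofReal_mul_le (hu.trans ht.1) ht.2) (norm_nonneg s)
  have := (convex_Icc u v).norm_image_sub_le_of_norm_hasDerivWithin_le
    (fun t _ => (hderiv t).hasDerivWithinAt) hbound (Set.left_mem_Icc.2 huv)
    (Set.right_mem_Icc.2 huv)
  rwa [Real.norm_of_nonneg (sub_nonneg.2 huv)] at this

lemma integrableOn_rpow_mul_linear_mul_exp_neg {k b : ℝ} (hk : -1 < k) (hb : 0 < b) (A B : ℝ) :
    IntegrableOn (fun x : ℝ => x ^ k * (A + B * x) * Real.exp (-b * x)) (Set.Ioi 0) := by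
  have hpow {p : ℝ} (hp : -1 < p) :
      IntegrableOn (fun x : ℝ => x ^ p * Real.exp (-b * x)) (Set.Ioi 0) := by
    simpa using integrableOn_rpow_mul_exp_neg_mul_rpow hp one_pos hb
  refine IntegrableOn.congr_fun (((hpow hk).const_mul A).add
    ((hpow (by linarith : -1 < k + 1)).const_mul B)) (fun x hx => ?_) measurableSet_Ioi
  simp only [Pi.add_apply, Real.rpow_add_one (ne_of_gt hx)]
  ring

noncomputable def rieszWeight (s : ℂ) (k x t : ℝ) : ℂ :=
  Complex.exp (t * s) * (((x - t) ^ k : ℝ) : ℂ)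

section rieszWeight

variable {s : ℂ} {k x : ℝ}

lemma norm_rieszWeight_le (hk : 0 ≤ k) {t : ℝ} (ht : 0 ≤ t) (htx : t ≤ x) :
    ‖rieszWeight s k x t‖ ≤ Real.exp (max 0 s.re * x) * x ^ k := by
  rw [rieszWeight, norm_mul, Complex.norm_real,
    Real.norm_of_nonneg (Real.rpow_nonneg (sub_nonneg.2 htx) k)]
  gcongr
  · exact norm_cexp_ofReal_mul_le ht htx
  · linarith

lemma norm_rieszWeight_sub_le (hk : 0 ≤ k) {u v : ℝ} (hu : 0 ≤ u) (huv : u ≤ v)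
    (hvx : v ≤ x) :
    ‖rieszWeight s k x v - rieszWeight s k x u‖ ≤
      Real.exp (max 0 s.re * x) * (‖s‖ * x ^ k * (v - u) + ((x - u) ^ k - (x - v) ^ k)) := by
  have hux : u ≤ x := huv.trans hvx
  have hsplit : rieszWeight s k x v - rieszWeight s k x u =
      (Complex.exp (v * s) - Complex.exp (u * s)) * (((x - v) ^ k : ℝ) : ℂ) -
        Complex.exp (u * s) * (((x - u) ^ k - (x - v) ^ k : ℝ) : ℂ) := by
    simp only [rieszWeight]; push_cast; ring
  have hexp : ‖Complex.exp (v * s) - Complex.exp (u * s)‖ ≤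
      Real.exp (max 0 s.re * x) * ‖s‖ * (v - u) :=
    (norm_cexp_ofReal_mul_sub_le hu huv).trans (by gcongr)
  have hpow : (x - v) ^ k ≤ x ^ k := Real.rpow_le_rpow (sub_nonneg.2 hvx) (by linarith) hk
  have hpow_anti : (x - v) ^ k ≤ (x - u) ^ k :=
    Real.rpow_le_rpow (sub_nonneg.2 hvx) (by linarith) hk
  rw [hsplit, mul_add]
  refine (norm_sub_le _ _).trans (add_le_add ?_ ?_) <;>
    rw [norm_mul, Complex.norm_real, Real.norm_of_nonneg (by first
      | exact Real.rpow_nonneg (sub_nonneg.2 hvx) k | linarith)]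
  · calc _ ≤ Real.exp (max 0 s.re * x) * ‖s‖ * (v - u) * x ^ k := by gcongr
      _ = _ := by ring
  · gcongr
    exact norm_cexp_ofReal_mul_le hu hux

lemma rieszWeight_variation_le (hk : 0 ≤ k) {t : ℕ → ℝ} (ht : Monotone t) (ht0 : 0 ≤ t 0)
    {n : ℕ} (htn : t n ≤ x) :
    ‖rieszWeight s k x (t n)‖ +
        ∑ i ∈ range n, ‖rieszWeight s k x (t (i + 1)) - rieszWeight s k x (t i)‖ ≤
      Real.exp (max 0 s.re * x) * x ^ k * (2 + ‖s‖ * x) := by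
  set E := Real.exp (max 0 s.re * x)
  have hnonneg (i : ℕ) : 0 ≤ t i := ht0.trans (ht (Nat.zero_le i))
  have hle {i : ℕ} (hi : i ≤ n) : t i ≤ x := (ht hi).trans htn
  have htelescope :
      ∑ i ∈ range n, ‖rieszWeight s k x (t (i + 1)) - rieszWeight s k x (t i)‖ ≤
      E * (‖s‖ * x ^ k * (t n - t 0) + ((x - t 0) ^ k - (x - t n) ^ k)) := by
    calc _ ≤ ∑ i ∈ range n,
          E * (‖s‖ * x ^ k * (t (i + 1) - t i) + ((x - t i) ^ k - (x - t (i + 1)) ^ k)) :=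
          sum_le_sum fun i hi => norm_rieszWeight_sub_le hk (hnonneg i) (ht (Nat.le_succ i))
            (hle (mem_range.1 hi))
      _ = _ := by
          rw [← mul_sum, sum_add_distrib, ← mul_sum, sum_range_sub t,
            sum_range_sub' (fun i => (x - t i) ^ k)]
  have hx : 0 ≤ x := (hnonneg n).trans htn
  have hspan : t n - t 0 ≤ x := by linarith [hnonneg 0]
  have hpow : (x - t 0) ^ k - (x - t n) ^ k ≤ x ^ k := by
    have : (x - t 0) ^ k ≤ x ^ k :=
      Real.rpow_le_rpow (sub_nonneg.2 (hle (Nat.zero_le n))) (by linarith [hnonneg 0]) hk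
    linarith [Real.rpow_nonneg (sub_nonneg.2 htn) k]
  calc _ ≤ E * x ^ k + E * (‖s‖ * x ^ k * x + x ^ k) := by
        gcongr
        · exact norm_rieszWeight_le hk (hnonneg n) htn
        · refine htelescope.trans ?_
          gcongr
    _ = _ := by ring

end rieszWeight

namespace IsFrequency

variable {lam : ℕ → ℝ} (hlam : IsFrequency lam)
include hlam

lemma strictMono_succ : StrictMono fun i => lam (i + 1) :=
  strictMono_nat_of_lt_succ fun i => hlam.1 (i + 1) (Nat.le_add_left 1 i)

lemma nonneg_succ (i : ℕ) : 0 ≤ lam (i + 1) :=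
  hlam.2.1.trans (hlam.strictMono_succ.monotone (Nat.zero_le i))

lemma exists_lt_iff_lt (x : ℝ) : ∃ N : ℕ, ∀ i, lam (i + 1) < x ↔ i < N := by
  classical
  have hex : ∃ i, x ≤ lam (i + 1) :=
    ((hlam.2.2.comp (tendsto_add_atTop_nat 1)).eventually_ge_atTop x).exists
  refine ⟨Nat.find hex, fun i => ⟨fun hi => ?_, fun hi => not_le.1 (Nat.find_min hex hi)⟩⟩
  by_contra hge
  exact hi.not_ge ((Nat.find_spec hex).trans (hlam.strictMono_succ.monotone (not_lt.1 hge)))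

end IsFrequency

lemma partialSum_eq_sum_range (lam : ℕ → ℝ) (a : ℕ → ℂ) (N : ℕ) (s : ℂ) :
    partialSum lam a N s =
      ∑ i ∈ range N, a (i + 1) * Complex.exp (-(lam (i + 1) : ℂ) * s) := by
  rw [partialSum, ← Finset.Ico_add_one_right_eq_Icc, sum_Ico_eq_sum_range]
  simp [add_comm]

noncomputable def rieszSum (lam : ℕ → ℝ) (a : ℕ → ℂ) (k x : ℝ) : ℂ :=
  ∑' n : ℕ, if 1 ≤ n ∧ lam n < x then a n * (((x - lam n) ^ k : ℝ) : ℂ) else 0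

section rieszSum

variable {lam : ℕ → ℝ} {a : ℕ → ℂ} {k x : ℝ}

lemma rieszSum_eq_sum_range {N : ℕ} (hN : ∀ i, lam (i + 1) < x ↔ i < N) :
    rieszSum lam a k x = ∑ i ∈ range N, a (i + 1) * (((x - lam (i + 1)) ^ k : ℝ) : ℂ) := by
  rw [rieszSum, tsum_eq_sum (s := range (N + 1)), sum_range_succ']
  · simp only [le_add_iff_nonneg_left, zero_le, hN, true_and, nonpos_iff_eq_zero, one_ne_zero,
      false_and, ↓reduceIte, add_zero]
    exact sum_congr rfl fun i hi => if_pos (mem_range.1 hi)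
  · refine fun n hn => if_neg fun ⟨hn1, hlt⟩ => hn ?_
    obtain ⟨i, rfl⟩ := Nat.exists_eq_add_one.2 hn1
    simpa using (hN i).1 hlt

lemma rieszSum_eq_zero_of_nonpos (hlam : IsFrequency lam) (hx : x ≤ 0) :
    rieszSum lam a k x = 0 := by
  rw [rieszSum_eq_sum_range (N := 0) fun i =>
    iff_of_false (by linarith [hlam.nonneg_succ i]) (Nat.not_lt_zero i), sum_range_zero]

lemma norm_rieszSum_le (hlam : IsFrequency lam) {s : ℂ} {C : ℝ}
    (hC : ∀ N, ‖partialSum lam a N s‖ ≤ C) (hk : 0 ≤ k) (hx : 0 ≤ x) :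
    ‖rieszSum lam a k x‖ ≤ C * (Real.exp (max 0 s.re * x) * x ^ k * (2 + ‖s‖ * x)) := by
  obtain ⟨N, hN⟩ := hlam.exists_lt_iff_lt x
  have hC0 : 0 ≤ C := (norm_nonneg _).trans (hC 0)
  rw [rieszSum_eq_sum_range hN]
  cases N with
  | zero => simpa using mul_nonneg hC0 (by positivity)
  | succ n =>
    have hfactor (i : ℕ) : a (i + 1) * (((x - lam (i + 1)) ^ k : ℝ) : ℂ) =
        rieszWeight s k x (lam (i + 1)) •
          (a (i + 1) * Complex.exp (-(lam (i + 1) : ℂ) * s)) := by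
      have : Complex.exp (lam (i + 1) * s) * Complex.exp (-(lam (i + 1) : ℂ) * s) = 1 := by
        rw [← Complex.exp_add, neg_mul, add_neg_cancel, Complex.exp_zero]
      rw [rieszWeight, smul_eq_mul]
      linear_combination (-(a (i + 1) * (((x - lam (i + 1)) ^ k : ℝ) : ℂ))) * this
    simp_rw [hfactor]
    refine (norm_sum_range_succ_smul_le _ _
      (fun N => partialSum_eq_sum_range lam a N s ▸ hC N) n).trans ?_
    gcongr
    exact rieszWeight_variation_le hk hlam.strictMono_succ.monotone (hlam.nonneg_succ 0)
      ((hN n).2 n.lt_succ_self).le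

end rieszSum

lemma measurable_rieszSum (lam : ℕ → ℝ) (a : ℕ → ℂ) (k : ℝ) :
    Measurable (rieszSum lam a k) := by
  refine (StronglyMeasurable.tsum fun n => ?_).measurable
  exact (Measurable.ite ((MeasurableSet.const _).inter measurableSet_Ioi) (by fun_prop)
    measurable_const).stronglyMeasurable

lemma norm_exp_mul_smul_rieszSum_le {lam : ℕ → ℝ} {a : ℕ → ℂ} {k : ℝ} (hlam : IsFrequency lam)
    {s : ℂ} {C : ℝ} (hC : ∀ N, ‖partialSum lam a N s‖ ≤ C) (hk : 0 ≤ k) (σ x : ℝ) :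
    ‖Real.exp (-σ * x) • rieszSum lam a k x‖ ≤ (Set.Ioi 0).indicator
      (fun x => C * (x ^ k * (2 + ‖s‖ * x) * Real.exp (-(σ - max 0 s.re) * x))) x := by
  rcases le_or_gt x 0 with hx | hx
  · rw [rieszSum_eq_zero_of_nonpos hlam hx, smul_zero, norm_zero,
      Set.indicator_of_notMem (Set.notMem_Ioi.2 hx)]
  have hexp : Real.exp (-σ * x) * Real.exp (max 0 s.re * x) =
      Real.exp (-(σ - max 0 s.re) * x) := by
    rw [← Real.exp_add]; ring_nf
  rw [Set.indicator_of_mem (Set.mem_Ioi.2 hx), norm_smul,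
    Real.norm_of_nonneg (Real.exp_pos _).le]
  calc _ ≤ Real.exp (-σ * x) *
        (C * (Real.exp (max 0 s.re * x) * x ^ k * (2 + ‖s‖ * x))) := by
        gcongr; exact norm_rieszSum_le hlam hC hk hx.le
    _ = _ := by rw [← hexp]; ring

theorem riesz_sum_integrable (lam : ℕ → ℝ) (a : ℕ → ℂ) (hfreq : IsFrequency lam)
    (s₀ : ℂ) (hconv : ∃ L : ℂ, Tendsto (fun N => partialSum lam a N s₀) atTop (nhds L)) :
    ∀ σ : ℝ, max 0 s₀.re < σ → ∀ k : ℝ, 0 ≤ k →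
      Integrable (fun x : ℝ => Real.exp (-σ * x) •
        ∑' n : ℕ, if 1 ≤ n ∧ lam n < x then
          a n * (((x - lam n) ^ k : ℝ) : ℂ) else 0) := by
  intro σ hσ k hk
  obtain ⟨C, hC⟩ : ∃ C, ∀ N, ‖partialSum lam a N s₀‖ ≤ C := by
    obtain ⟨L, hL⟩ := hconv
    obtain ⟨C, hC⟩ := hL.norm.bddAbove_range
    exact ⟨C, fun N => hC ⟨N, rfl⟩⟩
  have hmajorant := IntegrableOn.integrable_indicator ((integrableOn_rpow_mul_linear_mul_exp_neg
    (by linarith : -1 < k) (sub_pos.2 hσ) 2 ‖s₀‖).const_mul C) measurableSet_Ioi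
  refine hmajorant.mono' ?_ (ae_of_all _ (norm_exp_mul_smul_rieszSum_le hfreq hC hk σ))
  exact ((by fun_prop : Measurable fun x : ℝ => Real.exp (-σ * x)).smul
    (measurable_rieszSum lam a k)).aestronglyMeasurable
end

section
/- Let λ be a frequency, (a_n) complex coefficients and 0 < k ≤ 1. Suppose u ≥ 0 and the Riesz means R_x^k converge uniformly on the half-plane {s : Re s > u} as x → ∞ (i.e. they are uniformly Cauchy there as x → ∞). Then limsup_{x→∞} (1/x) · log( sup_{t ∈ ℝ} |R_x^k(it)| ) ≤ u. -/
open Filter Finset Complex MeasureTheory Topology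

/-- Riesz mean of order `k`: `R_x^k(s) = ∑_{λ_n < x} a_n (1 − λ_n/x)^k e^{−λ_n s}`
(a finite sum whenever `λ` is a frequency). -/
noncomputable def rieszMean (lam : ℕ → ℝ) (a : ℕ → ℂ) (k x : ℝ) (s : ℂ) : ℂ :=
  ∑' n : ℕ, if 1 ≤ n ∧ lam n < x then
    a n * (((1 - lam n / x) ^ k : ℝ) : ℂ) * Complex.exp (-(lam n : ℂ) * s) else 0

/-! For `x` large the Riesz means are uniformly bounded by some `C` on `Re s > u`. Each `R_x^k`
is a Dirichlet polynomial with frequencies `λ_n < x`, so `e^{x s} R_x^k(s)` is entire and bounded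
on every left half-plane `Re s ≤ b`; by Phragmén–Lindelöf it is bounded there by its bound
`C e^{x b}` on the line `Re s = b`. On the imaginary axis this gives `|R_x^k(it)| ≤ C e^{x b}` for
every `b > u`, whence `(1/x) log sup_t |R_x^k(it)| ≤ log C / x + b`. -/

lemma IsFrequency.nonneg {lam : ℕ → ℝ} (h : IsFrequency lam) {n : ℕ} (hn : 1 ≤ n) :
    0 ≤ lam n := by
  induction n, hn using Nat.le_induction with
  | base => exact h.2.1
  | succ m hm ih => exact ih.trans (h.1 m hm).le

lemma rieszMean_eq_sum {lam : ℕ → ℝ} (hfreq : IsFrequency lam) (a : ℕ → ℂ) (k x : ℝ) :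
    ∃ T : Finset ℕ, (∀ n ∈ T, 0 ≤ lam n ∧ lam n < x) ∧ ∀ s : ℂ, rieszMean lam a k x s =
      ∑ n ∈ T, a n * (((1 - lam n / x) ^ k : ℝ) : ℂ) * Complex.exp (-(lam n : ℂ) * s) := by
  obtain ⟨N, hN⟩ := eventually_atTop.1 (hfreq.2.2.eventually_ge_atTop x)
  refine ⟨(Icc 1 N).filter fun n => 1 ≤ n ∧ lam n < x, fun n hn => ?_, fun s => ?_⟩
  · obtain ⟨-, h1, hx⟩ := Finset.mem_filter.1 hn
    exact ⟨hfreq.nonneg h1, hx⟩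
  · rw [Finset.sum_filter, rieszMean]
    refine tsum_eq_sum fun n hn => if_neg ?_
    rintro ⟨h1, hx⟩
    exact hn (Finset.mem_Icc.2 ⟨h1, not_lt.1 fun hNn => (hN n hNn.le).not_gt hx⟩)

lemma norm_le_on_left_half_plane_of_bounded {f : ℂ → ℂ} {b C M : ℝ} (hf : Differentiable ℂ f)
    (hM : ∀ z : ℂ, z.re ≤ b → ‖f z‖ ≤ M) (hC : ∀ z : ℂ, z.re = b → ‖f z‖ ≤ C)
    {z : ℂ} (hz : z.re ≤ b) : ‖f z‖ ≤ C := by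
  have hg : Differentiable ℂ fun w => f (b - w) :=
    hf.comp ((differentiable_const _).sub differentiable_id)
  have hbdd : ∀ w : ℂ, 0 ≤ w.re → ‖f (b - w)‖ ≤ M := fun w hw => hM _ (by simp [hw])
  have hexp : (fun w => f (b - w)) =O[Bornology.cobounded ℂ ⊓ 𝓟 {w | 0 < w.re}]
      fun w => Real.exp (0 * ‖w‖ ^ (0 : ℝ)) := by
    refine Asymptotics.IsBigO.of_bound M (eventually_inf_principal.2 (Eventually.of_forall ?_))
    intro w hw
    simpa using hbdd w (le_of_lt hw)
  have hre : IsBoundedUnder (· ≤ ·) atTop fun y : ℝ => ‖f (b - y)‖ :=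
    isBoundedUnder_of_eventually_le ((eventually_ge_atTop 0).mono fun y hy => hbdd y (by simpa))
  simpa using PhragmenLindelof.right_half_plane_of_bounded_on_real hg.diffContOnCl
    ⟨0, two_pos, 0, hexp⟩ hre (fun y => hC _ (by simp)) (show 0 ≤ ((b : ℂ) - z).re by simpa)

section ExpSum

variable {T : Finset ℕ} {c : ℕ → ℂ} {μ : ℕ → ℝ}

lemma norm_expSum_le_sum_norm (hμ : ∀ n ∈ T, 0 ≤ μ n) {z : ℂ} (hz : 0 ≤ z.re) :
    ‖∑ n ∈ T, c n * Complex.exp (-(μ n : ℂ) * z)‖ ≤ ∑ n ∈ T, ‖c n‖ := by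
  refine (norm_sum_le _ _).trans (Finset.sum_le_sum fun n hn => ?_)
  rw [norm_mul, Complex.norm_exp]
  refine mul_le_of_le_one_right (norm_nonneg _) (Real.exp_le_one_iff.2 ?_)
  simpa using mul_nonneg (hμ n hn) hz

lemma norm_exp_mul_expSum_le (x : ℝ) (z : ℂ) :
    ‖Complex.exp (x * z) * ∑ n ∈ T, c n * Complex.exp (-(μ n : ℂ) * z)‖ ≤
      ∑ n ∈ T, ‖c n‖ * Real.exp ((x - μ n) * z.re) := by
  rw [Finset.mul_sum]
  refine (norm_sum_le _ _).trans (Finset.sum_le_sum fun n _ => le_of_eq ?_)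
  rw [mul_left_comm, ← Complex.exp_add, norm_mul, Complex.norm_exp]
  simp only [add_re, mul_re, ofReal_re, ofReal_im, neg_re, neg_im, zero_mul, sub_zero, neg_zero]
  ring_nf

theorem norm_expSum_le_of_forall_re_gt {x u b C : ℝ} (hμ : ∀ n ∈ T, μ n ≤ x)
    (hC : ∀ z : ℂ, u < z.re → ‖∑ n ∈ T, c n * Complex.exp (-(μ n : ℂ) * z)‖ ≤ C) (hub : u < b)
    {z : ℂ} (hz : z.re ≤ b) :
    ‖∑ n ∈ T, c n * Complex.exp (-(μ n : ℂ) * z)‖ ≤ C * Real.exp (x * (b - z.re)) := by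
  set P : ℂ → ℂ := fun w => ∑ n ∈ T, c n * Complex.exp (-(μ n : ℂ) * w)
  have hnorm : ∀ w : ℂ, ‖Complex.exp (x * w) * P w‖ = Real.exp (x * w.re) * ‖P w‖ := fun w => by
    rw [norm_mul, Complex.norm_exp]; simp
  have hbounded : ∀ w : ℂ, w.re ≤ b → ‖Complex.exp (x * w) * P w‖ ≤
      ∑ n ∈ T, ‖c n‖ * Real.exp ((x - μ n) * b) := fun w hw =>
    (norm_exp_mul_expSum_le x w).trans <| Finset.sum_le_sum fun n hn =>
      mul_le_mul_of_nonneg_left (Real.exp_le_exp.2 <|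
        mul_le_mul_of_nonneg_left hw (sub_nonneg.2 (hμ n hn))) (norm_nonneg _)
  have hline : ∀ w : ℂ, w.re = b → ‖Complex.exp (x * w) * P w‖ ≤ C * Real.exp (x * b) :=
    fun w hw => by
      rw [hnorm, hw, mul_comm]
      exact mul_le_mul_of_nonneg_right (hC w (hw ▸ hub)) (Real.exp_nonneg _)
  have key := norm_le_on_left_half_plane_of_bounded (by fun_prop) hbounded hline hz
  rw [hnorm, ← le_div_iff₀' (Real.exp_pos _)] at key
  rwa [mul_sub, Real.exp_sub, ← mul_div_assoc]

end ExpSum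

lemma exists_bound_rieszMean {lam : ℕ → ℝ} {a : ℕ → ℂ} {k u : ℝ} (hfreq : IsFrequency lam)
    (hu : 0 ≤ u)
    (hcauchy : ∀ δ : ℝ, 0 < δ → ∃ x₀ : ℝ, ∀ x : ℝ, x₀ ≤ x → ∀ y : ℝ, x₀ ≤ y →
      ∀ s : ℂ, u < s.re → ‖rieszMean lam a k x s - rieszMean lam a k y s‖ ≤ δ) :
    ∃ x₁ C : ℝ, 1 ≤ C ∧ ∀ x : ℝ, x₁ ≤ x → ∀ s : ℂ, u < s.re → ‖rieszMean lam a k x s‖ ≤ C := by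
  obtain ⟨x₁, hx₁⟩ := hcauchy 1 one_pos
  obtain ⟨T, hT, hrep⟩ := rieszMean_eq_sum hfreq a k x₁
  refine ⟨x₁, 1 + ∑ n ∈ T, ‖a n * (((1 - lam n / x₁) ^ k : ℝ) : ℂ)‖,
    le_add_of_nonneg_right (Finset.sum_nonneg fun _ _ => norm_nonneg _), fun x hx s hs => ?_⟩
  calc ‖rieszMean lam a k x s‖
      ≤ ‖rieszMean lam a k x s - rieszMean lam a k x₁ s‖ + ‖rieszMean lam a k x₁ s‖ :=
        norm_le_norm_sub_add _ _
    _ ≤ _ := add_le_add (hx₁ x hx x₁ le_rfl s hs) <| by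
        rw [hrep s]
        exact norm_expSum_le_sum_norm (fun n hn => (hT n hn).1) (hu.trans hs.le)

lemma norm_rieszMean_mul_I_le {lam : ℕ → ℝ} {a : ℕ → ℂ} {k x u b C : ℝ}
    (hfreq : IsFrequency lam) (hC : ∀ s : ℂ, u < s.re → ‖rieszMean lam a k x s‖ ≤ C)
    (hub : u < b) (hb : 0 ≤ b) (t : ℝ) :
    ‖rieszMean lam a k x (t * I)‖ ≤ C * Real.exp (x * b) := by
  obtain ⟨T, hT, hrep⟩ := rieszMean_eq_sum hfreq a k x
  simp_rw [hrep] at hC ⊢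
  simpa using norm_expSum_le_of_forall_re_gt (fun n hn => (hT n hn).2.le) hC hub
    (z := t * I) (by simpa using hb)

lemma inv_mul_log_le_of_le_mul_exp {S C x b : ℝ} (hx : 0 < x) (hC : 1 ≤ C) (hb : 0 ≤ b)
    (hS0 : 0 ≤ S) (hS : S ≤ C * Real.exp (x * b)) : 1 / x * Real.log S ≤ Real.log C / x + b := by
  rcases hS0.eq_or_lt with rfl | hS_pos
  · simpa using add_nonneg (div_nonneg (Real.log_nonneg hC) hx.le) hb
  calc 1 / x * Real.log S ≤ 1 / x * (Real.log C + x * b) := by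
        gcongr
        calc Real.log S ≤ Real.log (C * Real.exp (x * b)) := Real.log_le_log hS_pos hS
          _ = Real.log C + x * b := by
            rw [Real.log_mul (by positivity) (Real.exp_ne_zero _), Real.log_exp]
    _ = Real.log C / x + b := by field_simp

theorem riesz_uniform_summability_abscissa_converse_general (lam : ℕ → ℝ) (a : ℕ → ℂ)
    (hfreq : IsFrequency lam) (k : ℝ)
    (u : ℝ) (hu : 0 ≤ u)
    (hcauchy : ∀ δ : ℝ, 0 < δ → ∃ x₀ : ℝ, ∀ x : ℝ, x₀ ≤ x → ∀ y : ℝ, x₀ ≤ y →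
      ∀ s : ℂ, u < s.re →
        ‖rieszMean lam a k x s - rieszMean lam a k y s‖ ≤ δ) :
    ∀ ε : ℝ, 0 < ε → ∀ᶠ x : ℝ in atTop,
      (1 / x) * Real.log (⨆ t : ℝ, ‖rieszMean lam a k x (t * I)‖) ≤ u + ε := by
  intro ε hε
  obtain ⟨x₁, C, hC1, hC⟩ := exists_bound_rieszMean hfreq hu hcauchy
  have hlogC : Tendsto (fun x : ℝ => Real.log C / x) atTop (𝓝 0) :=
    tendsto_const_nhds.div_atTop tendsto_id
  filter_upwards [eventually_ge_atTop x₁, eventually_gt_atTop 0,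
    hlogC.eventually (ge_mem_nhds (half_pos hε))] with x hx₁ hx hlogC_le
  have hsup : ⨆ t : ℝ, ‖rieszMean lam a k x (t * I)‖ ≤ C * Real.exp (x * (u + ε / 2)) :=
    ciSup_le (norm_rieszMean_mul_I_le hfreq (hC x hx₁) (by linarith) (by linarith))
  have := inv_mul_log_le_of_le_mul_exp hx hC1 (by linarith)
    (Real.iSup_nonneg fun _ => norm_nonneg _) hsup
  linarith

theorem riesz_uniform_summability_abscissa_converse (lam : ℕ → ℝ) (a : ℕ → ℂ)
    (hfreq : IsFrequency lam) (k : ℝ) (hk0 : 0 < k) (hk1 : k ≤ 1)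
    (u : ℝ) (hu : 0 ≤ u)
    (hcauchy : ∀ δ : ℝ, 0 < δ → ∃ x₀ : ℝ, ∀ x : ℝ, x₀ ≤ x → ∀ y : ℝ, x₀ ≤ y →
      ∀ s : ℂ, u < s.re →
        ‖rieszMean lam a k x s - rieszMean lam a k y s‖ ≤ δ) :
    ∀ ε : ℝ, 0 < ε → ∀ᶠ x : ℝ in atTop,
      (1 / x) * Real.log (⨆ t : ℝ, ‖rieszMean lam a k x (t * I)‖) ≤ u + ε :=
  riesz_uniform_summability_abscissa_converse_general lam a hfreq k u hu hcauchy
end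

section
/- (Bohr–Cahen formula for the abscissa of uniform convergence.) Let λ be a frequency and (a_n) complex coefficients, and set L := limsup_{N→∞} (1/λ_N) · log( sup_{t ∈ ℝ} |∑_{n=1}^N a_n e^{−i λ_n t}| ). If L < ∞, then for every ε > 0 the series ∑_n a_n e^{−λ_n s} converges uniformly on the half-plane {s : Re s > L + ε} (its partial sums are uniformly Cauchy there). -/
open Filter Finset Complex MeasureTheory Topology

/-!
Write `s = σ + iτ`, `T_n := S_n(iτ)` and `w_n := e^{-σ λ_n}`, so that
`a_n e^{-λ_n s} = (T_n - T_{n-1}) w_n` and summation by parts expresses `S_N(s) - S_M(s)` through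
the `T_n` and the increments of `w`. With `α := L + ε/2` we have `‖T_n‖ ≤ e^{α λ_n}` for large `n`;
Bohr's inequality `‖a_{n+1}‖ ≤ sup_t ‖S_{n+1}(it)‖` improves this to `‖T_n‖ ≤ 2 e^{α t}` for all
`t ∈ [λ_n, λ_{n+1}]`, which matters when `α < 0` and the gap `λ_{n+1} - λ_n` is large.
Comparing derivatives on `[λ_n, λ_{n+1}]` then bounds each term by a telescoping one,
`C (e^{-(σ-α)λ_n} - e^{-(σ-α)λ_{n+1}})` with `C` uniform on `Re s ≥ α + ε/2`, so the tail is
`O(e^{-ε λ_M / 2})` uniformly there.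
-/

theorem sum_Ioc_smul_sub_by_parts {R E : Type*} [Ring R] [AddCommGroup E] [Module R E]
    (w : ℕ → R) (T : ℕ → E) {M N : ℕ} (hMN : M ≤ N) :
    ∑ n ∈ Ioc M N, w n • (T n - T (n - 1)) =
      w N • T N - w M • T M + ∑ n ∈ Ico M N, (w n - w (n + 1)) • T n := by
  induction N, hMN using Nat.le_induction with
  | base => simp
  | succ N hMN ih =>
    rw [sum_Ioc_succ_top (by omega), ih, sum_Ico_succ_top hMN, Nat.add_sub_cancel]
    simp only [smul_sub, sub_smul]
    abel

theorem min_exp_mul_le_exp_mul {α x y t : ℝ} (ht : t ∈ Set.Icc x y) :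
    min (Real.exp (α * x)) (Real.exp (α * y)) ≤ Real.exp (α * t) := by
  rcases le_total 0 α with hα | hα
  · exact (min_le_left _ _).trans (Real.exp_le_exp.2 (mul_le_mul_of_nonneg_left ht.1 hα))
  · exact (min_le_right _ _).trans (Real.exp_le_exp.2 (mul_le_mul_of_nonpos_left ht.2 hα))

/-- On `[x, y]` the derivative of `m e^{-σt}` has norm at most `|σ| e^{-(σ-α)t}`, the derivative of
`-(|σ| / (σ - α)) e^{-(σ-α)t}`. -/
theorem mul_abs_exp_sub_le {α σ m x y : ℝ} (hασ : α < σ) (hm : 0 ≤ m) (hxy : x ≤ y)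
    (hmx : ∀ t ∈ Set.Icc x y, m ≤ Real.exp (α * t)) :
    m * |Real.exp (-(σ * y)) - Real.exp (-(σ * x))| ≤
      |σ| / (σ - α) * (Real.exp (-((σ - α) * x)) - Real.exp (-((σ - α) * y))) := by
  have hβ : σ - α ≠ 0 := (sub_pos.2 hασ).ne'
  have hf (t : ℝ) : HasDerivAt (fun t => m * (Real.exp (-(σ * t)) - Real.exp (-(σ * x))))
      (m * (Real.exp (-(σ * t)) * -σ)) t := by
    have := ((hasDerivAt_id t).const_mul σ).neg.exp
    simpa using (this.sub_const (Real.exp (-(σ * x)))).const_mul m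
  have hB (t : ℝ) : HasDerivAt
      (fun t => |σ| / (σ - α) * (Real.exp (-((σ - α) * x)) - Real.exp (-((σ - α) * t))))
      (|σ| * Real.exp (-((σ - α) * t))) t := by
    have := (((hasDerivAt_id t).const_mul (σ - α)).neg.exp.const_sub
      (Real.exp (-((σ - α) * x)))).const_mul (|σ| / (σ - α))
    exact HasDerivAt.congr_deriv (by simpa using this) (by field_simp; ring)
  have bound (t : ℝ) (ht : t ∈ Set.Icc x y) :
      ‖m * (Real.exp (-(σ * t)) * -σ)‖ ≤ |σ| * Real.exp (-((σ - α) * t)) := calc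
    ‖m * (Real.exp (-(σ * t)) * -σ)‖ = |σ| * (m * Real.exp (-(σ * t))) := by
      simp [abs_of_nonneg hm, abs_of_pos (Real.exp_pos _)]; ring
    _ ≤ |σ| * (Real.exp (α * t) * Real.exp (-(σ * t))) := by gcongr; exact hmx t ht
    _ = |σ| * Real.exp (-((σ - α) * t)) := by rw [← Real.exp_add]; ring_nf
  simpa [abs_of_nonneg hm, abs_mul] using
    image_norm_le_of_norm_deriv_right_le_deriv_boundary (a := x) (b := y)
      (fun t _ => (hf t).continuousAt.continuousWithinAt) (fun t _ => (hf t).hasDerivWithinAt)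
      (by simp) hB (fun t ht => bound t (Set.Ico_subset_Icc_self ht)) (Set.right_mem_Icc.2 hxy)

theorem norm_integral_exp_mul_I_le {ω : ℝ} (hω : ω ≠ 0) (T : ℝ) :
    ‖∫ t in (0 : ℝ)..T, Complex.exp (ω * I * t)‖ ≤ 2 / |ω| := by
  have hc : (ω : ℂ) * I ≠ 0 := mul_ne_zero (ofReal_ne_zero.2 hω) I_ne_zero
  rw [integral_exp_mul_complex hc, norm_div, norm_mul, norm_I, mul_one, norm_real,
    Real.norm_eq_abs]
  gcongr
  refine (norm_sub_le _ _).trans_eq ?_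
  simp [Complex.norm_exp]
  norm_num

/-- Bohr's inequality: averaging `P(t) e^{iω_k t}` over `[0, T]` recovers `c_k` up to `O(1/T)`. -/
theorem norm_le_of_forall_norm_sum_exp_le {ι : Type*} {s : Finset ι} {ω : ι → ℝ}
    (hω : Set.InjOn ω s) (c : ι → ℂ) {k : ι} (hk : k ∈ s) {B : ℝ}
    (hB : ∀ t : ℝ, ‖∑ j ∈ s, c j * Complex.exp (-(ω j : ℂ) * (t * I))‖ ≤ B) : ‖c k‖ ≤ B := by
  classical
  set P : ℝ → ℂ := fun t => ∑ j ∈ s, c j * Complex.exp (-(ω j : ℂ) * (t * I))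
  set C := ∑ j ∈ s.erase k, ‖c j‖ * (2 / |ω k - ω j|)
  have hC : 0 ≤ C := by positivity
  have hmean (T : ℝ) : ∫ t in (0 : ℝ)..T, P t * Complex.exp (ω k * I * t) =
      T * c k + ∑ j ∈ s.erase k, c j * ∫ t in (0 : ℝ)..T,
        Complex.exp (((ω k - ω j : ℝ) : ℂ) * I * t) := by
    have hP (t : ℝ) : P t * Complex.exp (ω k * I * t) =
        ∑ j ∈ s, c j * Complex.exp (((ω k - ω j : ℝ) : ℂ) * I * t) := by
      simp only [P, Finset.sum_mul, mul_assoc, ← Complex.exp_add]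
      congr! 3
      push_cast
      ring
    simp_rw [hP]
    rw [intervalIntegral.integral_finsetSum fun j _ => by
      exact (by fun_prop : Continuous _).intervalIntegrable _ _, ← add_sum_erase _ _ hk]
    simp [intervalIntegral.integral_const_mul]
  have hscaled (T : ℝ) (hT : 0 < T) : T * ‖c k‖ ≤ T * B + C := by
    have hint : ‖∫ t in (0 : ℝ)..T, P t * Complex.exp (ω k * I * t)‖ ≤ B * |T - 0| :=
      intervalIntegral.norm_integral_le_of_norm_le_const fun t _ => by
        simpa [P, norm_mul, Complex.norm_exp] using hB t
    have hrest : ‖∑ j ∈ s.erase k, c j * ∫ t in (0 : ℝ)..T,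
        Complex.exp (((ω k - ω j : ℝ) : ℂ) * I * t)‖ ≤ C := by
      refine (norm_sum_le _ _).trans (sum_le_sum fun j hj => ?_)
      have hjk : ω k - ω j ≠ 0 := sub_ne_zero.2 fun h =>
        (ne_of_mem_erase hj) (hω (mem_of_mem_erase hj) hk h.symm)
      rw [norm_mul]
      gcongr
      exact norm_integral_exp_mul_I_le hjk T
    rw [hmean, sub_zero, abs_of_pos hT, mul_comm B] at hint
    calc T * ‖c k‖ = ‖T * c k‖ := by simp [abs_of_pos hT]
      _ ≤ ‖T * c k + ∑ j ∈ s.erase k, c j * ∫ t in (0 : ℝ)..T,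
          Complex.exp (((ω k - ω j : ℝ) : ℂ) * I * t)‖ + C :=
        (norm_le_add_norm_add _ _).trans (by gcongr)
      _ ≤ T * B + C := by gcongr
  refine le_of_forall_pos_lt_add fun η hη => ?_
  have hT : 0 < (C + 1) / η := by positivity
  refine lt_of_mul_lt_mul_left ?_ hT.le
  calc (C + 1) / η * ‖c k‖ ≤ (C + 1) / η * B + C := hscaled _ hT
    _ < (C + 1) / η * (B + η) := by rw [mul_add, div_mul_cancel₀ _ hη.ne']; linarith

section partialSum

variable {lam : ℕ → ℝ} {a : ℕ → ℂ}

theorem partialSum_succ (N : ℕ) (s : ℂ) :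
    partialSum lam a (N + 1) s =
      partialSum lam a N s + a (N + 1) * Complex.exp (-(lam (N + 1) : ℂ) * s) :=
  sum_Icc_succ_top (by omega) _

theorem partialSum_sub_partialSum {M N : ℕ} (hMN : M ≤ N) (s : ℂ) :
    partialSum lam a N s - partialSum lam a M s =
      ∑ n ∈ Ioc M N, a n * Complex.exp (-(lam n : ℂ) * s) := by
  rw [partialSum, partialSum, ← zero_add 1, Icc_add_one_left_eq_Ioc, Icc_add_one_left_eq_Ioc,
    ← sum_Ioc_consecutive _ M.zero_le hMN, add_sub_cancel_left]

theorem partialSum_sub_partialSum_eq_sum_smul {M N : ℕ} (hMN : M ≤ N) (s : ℂ) :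
    partialSum lam a N s - partialSum lam a M s =
      ∑ n ∈ Ioc M N, Real.exp (-(s.re * lam n)) •
        (partialSum lam a n (s.im * I) - partialSum lam a (n - 1) (s.im * I)) := by
  rw [partialSum_sub_partialSum hMN]
  refine sum_congr rfl fun n hn => ?_
  obtain ⟨m, rfl⟩ : ∃ m, n = m + 1 := ⟨n - 1, by have := (mem_Ioc.1 hn).1; omega⟩
  rw [partialSum_succ, Nat.add_sub_cancel, add_sub_cancel_left, Complex.real_smul,
    Complex.ofReal_exp, mul_left_comm, ← Complex.exp_add]
  congr 2
  conv_lhs => rw [← Complex.re_add_im s]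
  push_cast
  ring

theorem norm_partialSum_mul_I_le_exp {N : ℕ} {α : ℝ} (hN : 0 < lam N)
    (h : 1 / lam N * Real.log (⨆ t : ℝ, ‖partialSum lam a N (t * I)‖) < α) (τ : ℝ) :
    ‖partialSum lam a N (τ * I)‖ ≤ Real.exp (α * lam N) := by
  have hbdd : BddAbove (Set.range fun t : ℝ => ‖partialSum lam a N (t * I)‖) := by
    refine ⟨∑ n ∈ Icc 1 N, ‖a n‖, ?_⟩
    rintro _ ⟨t, rfl⟩
    refine (norm_sum_le _ _).trans (le_of_eq (sum_congr rfl fun n _ => ?_))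
    simp [Complex.norm_exp]
  rw [one_div_mul_eq_div, div_lt_iff₀ hN] at h
  calc ‖partialSum lam a N (τ * I)‖ ≤ ⨆ t : ℝ, ‖partialSum lam a N (t * I)‖ := le_ciSup hbdd τ
    _ ≤ Real.exp (Real.log (⨆ t : ℝ, ‖partialSum lam a N (t * I)‖)) := Real.le_exp_log _
    _ ≤ Real.exp (α * lam N) := Real.exp_le_exp.2 h.le

namespace IsFrequency

theorem strictMonoOn (hlam : IsFrequency lam) : StrictMonoOn lam (Set.Ici 1) :=
  strictMonoOn_Ici_of_pred_lt fun m hm => by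
    simpa [Nat.sub_add_cancel hm.le] using hlam.1 (m - 1) (by omega)

theorem norm_partialSum_mul_I_le_two_mul (hlam : IsFrequency lam) {n : ℕ} {B : ℝ}
    (hB : ∀ t : ℝ, ‖partialSum lam a (n + 1) (t * I)‖ ≤ B) (τ : ℝ) :
    ‖partialSum lam a n (τ * I)‖ ≤ 2 * B := by
  have hcoeff : ‖a (n + 1)‖ ≤ B :=
    norm_le_of_forall_norm_sum_exp_le (hlam.strictMonoOn.injOn.mono fun k hk => (mem_Icc.1 hk).1)
      a (by simp) hB
  calc ‖partialSum lam a n (τ * I)‖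
      = ‖partialSum lam a (n + 1) (τ * I) -
          a (n + 1) * Complex.exp (-(lam (n + 1) : ℂ) * (τ * I))‖ := by
        rw [partialSum_succ, add_sub_cancel_right]
    _ ≤ B + B :=
        (norm_sub_le _ _).trans (add_le_add (hB τ) (by simpa [Complex.norm_exp] using hcoeff))
    _ = 2 * B := by ring

theorem norm_partialSum_sub_le (hlam : IsFrequency lam) {α : ℝ} {N₀ : ℕ} (hN₀ : 1 ≤ N₀)
    (hbound : ∀ n ≥ N₀, ∀ τ : ℝ, ‖partialSum lam a n (τ * I)‖ ≤ Real.exp (α * lam n))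
    {s : ℂ} (hs : α < s.re) {M N : ℕ} (hM : N₀ ≤ M) (hMN : M ≤ N) :
    ‖partialSum lam a N s - partialSum lam a M s‖ ≤
      2 * (1 + |s.re| / (s.re - α)) * Real.exp (-((s.re - α) * lam M)) := by
  set σ := s.re
  set C := |σ| / (σ - α)
  set T : ℕ → ℂ := fun n => partialSum lam a n (s.im * I)
  set w : ℕ → ℝ := fun n => Real.exp (-(σ * lam n))
  set u : ℕ → ℝ := fun n => Real.exp (-((σ - α) * lam n))
  have hC : 0 ≤ C := div_nonneg (abs_nonneg σ) (sub_pos.2 hs).le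
  have hu (n : ℕ) : Real.exp (α * lam n) * w n = u n := by
    simp only [w, u, ← Real.exp_add]; ring_nf
  have huMN : u N ≤ u M :=
    Real.exp_le_exp.2 <| neg_le_neg <| mul_le_mul_of_nonneg_left
      (hlam.strictMonoOn.monotoneOn (by simp; omega) (by simp; omega) hMN) (sub_pos.2 hs).le
  have hboundary (n : ℕ) (hn : N₀ ≤ n) : w n * ‖T n‖ ≤ u n :=
    (mul_le_mul_of_nonneg_left (hbound n hn _) (Real.exp_pos _).le).trans_eq
      (by rw [mul_comm, hu])
  have hterm (n : ℕ) (hn : N₀ ≤ n) : |w n - w (n + 1)| * ‖T n‖ ≤ 2 * C * (u n - u (n + 1)) := by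
    set m := min (Real.exp (α * lam n)) (Real.exp (α * lam (n + 1)))
    have hT : ‖T n‖ ≤ 2 * m := by
      rw [mul_min_of_nonneg _ _ zero_le_two]
      exact le_min ((hbound n hn _).trans (by linarith [Real.exp_pos (α * lam n)]))
        (hlam.norm_partialSum_mul_I_le_two_mul (hbound (n + 1) (by omega)) _)
    calc |w n - w (n + 1)| * ‖T n‖ ≤ |w (n + 1) - w n| * (2 * m) := by
          rw [abs_sub_comm]; gcongr
      _ = 2 * (m * |w (n + 1) - w n|) := by ring
      _ ≤ 2 * (C * (u n - u (n + 1))) := by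
          gcongr 2 * ?_
          exact mul_abs_exp_sub_le hs (by positivity) (hlam.1 n (by omega)).le
            fun t ht => min_exp_mul_le_exp_mul ht
      _ = 2 * C * (u n - u (n + 1)) := by ring
  have htelescope : ∑ n ∈ Ico M N, (u n - u (n + 1)) = u M - u N := by
    simpa only [neg_sub_neg] using sum_Ico_sub (fun n => -u n) hMN
  calc ‖partialSum lam a N s - partialSum lam a M s‖
      = ‖w N • T N - w M • T M + ∑ n ∈ Ico M N, (w n - w (n + 1)) • T n‖ := by
        rw [partialSum_sub_partialSum_eq_sum_smul hMN, sum_Ioc_smul_sub_by_parts _ _ hMN]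
    _ ≤ ‖w N • T N‖ + ‖w M • T M‖ + ∑ n ∈ Ico M N, ‖(w n - w (n + 1)) • T n‖ :=
        (norm_add_le _ _).trans (add_le_add (norm_sub_le _ _) (norm_sum_le _ _))
    _ = w N * ‖T N‖ + w M * ‖T M‖ + ∑ n ∈ Ico M N, |w n - w (n + 1)| * ‖T n‖ := by
        simp only [norm_smul, Real.norm_eq_abs, w, abs_of_pos (Real.exp_pos _)]
    _ ≤ u N + u M + ∑ n ∈ Ico M N, 2 * C * (u n - u (n + 1)) := by
        gcongr ?_ + ?_ + ∑ n ∈ Ico M N, ?_ with n hn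
        · exact hboundary N (hM.trans hMN)
        · exact hboundary M hM
        · exact hterm n (hM.trans (mem_Ico.1 hn).1)
    _ = u N + u M + 2 * C * (u M - u N) := by rw [← mul_sum, htelescope]
    _ ≤ 2 * (1 + C) * u M := by nlinarith [mul_nonneg hC (Real.exp_pos (-((σ - α) * lam N))).le]

theorem norm_partialSum_sub_le_of_add_le_re (hlam : IsFrequency lam) {α η : ℝ} {N₀ : ℕ}
    (hN₀ : 1 ≤ N₀)
    (hbound : ∀ n ≥ N₀, ∀ τ : ℝ, ‖partialSum lam a n (τ * I)‖ ≤ Real.exp (α * lam n))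
    (hη : 0 < η) {s : ℂ} (hs : α + η ≤ s.re) {M N : ℕ} (hM : N₀ ≤ M) (hMN : M ≤ N) :
    ‖partialSum lam a N s - partialSum lam a M s‖ ≤
      2 * (2 + |α| / η) * Real.exp (-(η * lam M)) := by
  have hgap : η ≤ s.re - α := by linarith
  have hlamM : 0 ≤ lam M :=
    hlam.2.1.trans (hlam.strictMonoOn.monotoneOn (by simp) (by simp; omega) (by omega))
  have hratio : |s.re| / (s.re - α) ≤ 1 + |α| / η := by
    rw [div_le_iff₀ (hη.trans_le hgap), add_mul, one_mul]
    have : |α| ≤ |α| / η * (s.re - α) := by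
      rw [div_mul_eq_mul_div, le_div_iff₀ hη]
      exact mul_le_mul_of_nonneg_left hgap (abs_nonneg α)
    linarith [abs_sub_abs_le_abs_sub s.re α, abs_of_pos (hη.trans_le hgap)]
  refine (hlam.norm_partialSum_sub_le hN₀ hbound (by linarith) hM hMN).trans ?_
  gcongr 2 * ?_ * Real.exp ?_
  · linarith
  · exact neg_le_neg (mul_le_mul_of_nonneg_right hgap hlamM)

end IsFrequency

end partialSum

/-- Bohr–Cahen formula for the abscissa of uniform convergence. -/
theorem bohr_cahen_uniform (lam : ℕ → ℝ) (a : ℕ → ℂ) (hfreq : IsFrequency lam)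
    (hbd : IsBoundedUnder (· ≤ ·) atTop (fun N : ℕ =>
      (1 / lam N) * Real.log (⨆ t : ℝ, ‖partialSum lam a N (t * I)‖))) :
    ∀ ε : ℝ, 0 < ε → ∀ δ : ℝ, 0 < δ → ∃ N₀ : ℕ, ∀ N : ℕ, N₀ ≤ N → ∀ M : ℕ, N₀ ≤ M →
      ∀ s : ℂ,
        (limsup (fun N : ℕ =>
          (1 / lam N) * Real.log (⨆ t : ℝ, ‖partialSum lam a N (t * I)‖)) atTop)
            + ε < s.re →
        ‖partialSum lam a N s - partialSum lam a M s‖ ≤ δ := by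
  intro ε hε δ hδ
  set L := limsup (fun N : ℕ =>
    (1 / lam N) * Real.log (⨆ t : ℝ, ‖partialSum lam a N (t * I)‖)) atTop
  set K := 2 * (2 + |L + ε / 2| / (ε / 2))
  obtain ⟨N₁, hN₁⟩ := eventually_atTop.1 <| (eventually_lt_of_limsup_lt (lt_add_of_pos_right L
    (half_pos hε)) hbd).and <| (hfreq.2.2.eventually_gt_atTop 0).and
      (hfreq.2.2.eventually_ge_atTop (Real.log (K / δ) / (ε / 2)))
  have hbound : ∀ n ≥ max N₁ 1, ∀ τ : ℝ,
      ‖partialSum lam a n (τ * I)‖ ≤ Real.exp ((L + ε / 2) * lam n) := fun n hn =>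
    have hn := hN₁ n (le_of_max_le_left hn)
    norm_partialSum_mul_I_le_exp hn.2.1 hn.1
  refine ⟨max N₁ 1, fun N hN M hM s hs => ?_⟩
  wlog hMN : M ≤ N generalizing M N
  · rw [norm_sub_rev]
    exact this M hM N hN (le_of_not_ge hMN)
  have hlog : Real.log (K / δ) ≤ ε / 2 * lam M := by
    rw [mul_comm, ← div_le_iff₀ (half_pos hε)]
    exact (hN₁ M (le_of_max_le_left hM)).2.2
  calc ‖partialSum lam a N s - partialSum lam a M s‖
      ≤ K * Real.exp (-(ε / 2 * lam M)) :=
        hfreq.norm_partialSum_sub_le_of_add_le_re (le_max_right _ _) hbound (half_pos hε)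
          (by linarith) hM hMN
    _ ≤ K * Real.exp (-Real.log (K / δ)) := by gcongr
    _ = δ := by
      rw [Real.exp_neg, Real.exp_log (by positivity), inv_div, mul_div_cancel₀ _ (by positivity)]
end

section
/- The sequence λ given by λ_n = √(log n) for n ≥ 1 is a frequency that satisfies Landau's condition (LC) but has limsup_{n→∞} (log n)/λ_n = +∞ (so Bohr's condition (BC) fails for it). In particular, there exists a constant C > 0 such that √(log(n+1)) − √(log n) ≥ C · n^{−2} for all n ≥ 1, and indeed n²·(√(log(n+1)) − √(log n)) → +∞ as n → ∞. -/
open Filter Finset Complex MeasureTheory Topology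

/-- Landau's condition `(LC)`. -/
def LandauCondition (lam : ℕ → ℝ) : Prop :=
  ∀ δ : ℝ, 0 < δ → ∃ C : ℝ, 0 < C ∧ ∀ n : ℕ, 1 ≤ n →
    C * Real.exp (-Real.exp (δ * lam n)) ≤ lam (n + 1) - lam n

/-- Bohr's condition `(BC)`. -/
def BohrCondition (lam : ℕ → ℝ) : Prop :=
  ∃ l : ℝ, 0 < l ∧ ∀ δ : ℝ, 0 < δ → ∃ C : ℝ, 0 < C ∧ ∀ n : ℕ, 1 ≤ n →
    C * Real.exp (-(l + δ) * lam n) ≤ lam (n + 1) - lam n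

/-!
Since `√b - √a ≥ (b - a) / (2√b)` and `log (n + 1) - log n ≥ 1 / (n + 1)`, the gaps of
`λ_n = √(log n)` satisfy `λ_{n+1} - λ_n ≥ √n / (4 n²) ≥ 1 / (4 n²) = exp (-2 λ_n²) / 4`, and
`2 t² ≤ exp (δ t) + K` makes this dominate Landau's bound `exp (-exp (δ λ_n))`. On the other
hand `log n / λ_n = λ_n → ∞`, while under (BC) counting the gaps below `λ_N` gives
`log N = O(λ_N)`.
-/

open Real

lemma Real.inv_add_one_le_log_add_one_sub_log {x : ℝ} (hx : 0 < x) :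
    (x + 1)⁻¹ ≤ log (x + 1) - log x := by
  have h := one_sub_inv_le_log_of_pos (div_pos (by linarith : 0 < x + 1) hx)
  rwa [log_div (by linarith) hx.ne', inv_div, one_sub_div (by linarith), add_sub_cancel_left,
    one_div] at h

lemma Real.sub_div_two_sqrt_le_sqrt_sub_sqrt {a b : ℝ} (ha : 0 ≤ a) (hab : a ≤ b) :
    (b - a) / (2 * √b) ≤ √b - √a := by
  have hsqrt : √a ≤ √b := sqrt_le_sqrt hab
  refine div_le_of_le_mul₀ (by positivity) (by linarith) ?_
  calc b - a = (√b - √a) * (√b + √a) := by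
        linear_combination sq_sqrt ha - sq_sqrt (ha.trans hab)
    _ ≤ (√b - √a) * (2 * √b) := by gcongr; linarith

lemma Real.sqrt_div_four_le_sq_mul_sqrt_log_add_one_sub {x : ℝ} (hx : 1 ≤ x) :
    √x / 4 ≤ x ^ 2 * (√(log (x + 1)) - √(log x)) := by
  have hx0 : 0 < x := by linarith
  have hlog : log (x + 1) ≤ x := by linarith [log_le_sub_one_of_pos (by linarith : 0 < x + 1)]
  calc √x / 4 = x ^ 2 * ((2 * x)⁻¹ / (2 * √x)) := by
        field_simp; rw [sq_sqrt hx0.le]; ring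
    _ ≤ x ^ 2 * ((x + 1)⁻¹ / (2 * √(log (x + 1)))) := by
        have : 0 < log (x + 1) := log_pos (by linarith)
        gcongr
        linarith
    _ ≤ x ^ 2 * ((log (x + 1) - log x) / (2 * √(log (x + 1)))) := by
        gcongr; exact inv_add_one_le_log_add_one_sub_log hx0
    _ ≤ x ^ 2 * (√(log (x + 1)) - √(log x)) := by
        gcongr
        exact sub_div_two_sqrt_le_sqrt_sub_sqrt (log_nonneg hx) (log_le_log hx0 (by linarith))

lemma Real.one_div_four_div_sq_le_sqrt_log_add_one_sub {x : ℝ} (hx : 1 ≤ x) :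
    1 / 4 / x ^ 2 ≤ √(log (x + 1)) - √(log x) := by
  rw [div_le_iff₀' (by positivity)]
  linarith [sqrt_div_four_le_sq_mul_sqrt_log_add_one_sub hx, one_le_sqrt.2 hx]

lemma Real.exists_mul_sq_le_exp_mul_add (a : ℝ) {δ : ℝ} (hδ : 0 < δ) :
    ∃ K, ∀ t, 0 ≤ t → a * t ^ 2 ≤ exp (δ * t) + K := by
  have hc : 0 < (|a| + 1)⁻¹ := by positivity
  obtain ⟨T, hT⟩ := eventually_atTop.1 ((isLittleO_pow_exp_pos_mul_atTop 2 hδ).def hc)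
  refine ⟨|a| * T ^ 2, fun t ht => ?_⟩
  have hexp := (exp_pos (δ * t)).le
  have hat : a * t ^ 2 ≤ |a| * t ^ 2 := by gcongr; exact le_abs_self a
  rcases le_total T t with hTt | htT
  · have h := hT t hTt
    rw [Real.norm_of_nonneg (by positivity), Real.norm_of_nonneg hexp, inv_mul_eq_div,
      le_div_iff₀ (by positivity)] at h
    nlinarith [abs_nonneg a, sq_nonneg T]
  · have : t ^ 2 ≤ T ^ 2 := by gcongr
    nlinarith [abs_nonneg a]

theorem landauCondition_of_mul_exp_le_sub {lam : ℕ → ℝ} {a c : ℝ} (hc : 0 < c)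
    (hlam : ∀ n, 1 ≤ n → 0 ≤ lam n)
    (hgap : ∀ n, 1 ≤ n → c * Real.exp (-(a * lam n ^ 2)) ≤ lam (n + 1) - lam n) :
    LandauCondition lam := by
  intro δ hδ
  obtain ⟨K, hK⟩ := exists_mul_sq_le_exp_mul_add a hδ
  refine ⟨c * Real.exp (-K), by positivity, fun n hn => (le_trans ?_ (hgap n hn))⟩
  rw [mul_assoc, ← Real.exp_add]
  gcongr
  linarith [hK (lam n) (hlam n hn)]

lemma sub_one_mul_le_sub_of_le_sub {lam : ℕ → ℝ} {f : ℝ → ℝ} (hf : Antitone f)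
    (hmono : ∀ n, 1 ≤ n → lam n ≤ lam (n + 1))
    (hgap : ∀ n, 1 ≤ n → f (lam n) ≤ lam (n + 1) - lam n) :
    ∀ N : ℕ, 1 ≤ N → ((N : ℝ) - 1) * f (lam N) ≤ lam N - lam 1 := by
  intro N hN
  induction N, hN using Nat.le_induction with
  | base => simp
  | succ N hN ih =>
    have hfN : f (lam (N + 1)) ≤ f (lam N) := hf (hmono N hN)
    have hN1 : (0 : ℝ) ≤ N - 1 := by
      rw [sub_nonneg]; exact_mod_cast hN
    push_cast
    nlinarith [hgap N hN]

/-- The `N - 1` gaps below `λ_N` are each at least `C exp (-(l + 1) λ_N)`, and they add up to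
at most `λ_N ≤ exp λ_N`; hence `N ≤ (2 / C) exp ((l + 2) λ_N)`. -/
theorem BohrCondition.isBoundedUnder_log_div {lam : ℕ → ℝ} (hB : BohrCondition lam)
    (hlam : IsFrequency lam) :
    IsBoundedUnder (· ≤ ·) atTop (fun n : ℕ => Real.log n / lam n) := by
  obtain ⟨hmono, hlam1, htends⟩ := hlam
  obtain ⟨l, hl, hB⟩ := hB
  obtain ⟨C, hC, hgap⟩ := hB 1 one_pos
  have hcount := sub_one_mul_le_sub_of_le_sub (f := fun x => C * Real.exp (-(l + 1) * x))
    (fun x y hxy => mul_le_mul_of_nonneg_left (Real.exp_le_exp.2 (by nlinarith)) hC.le)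
    (fun n hn => (hmono n hn).le) hgap
  refine isBoundedUnder_of_eventually_le (a := (l + 2) + |Real.log (2 / C)|) ?_
  filter_upwards [eventually_ge_atTop 2, htends.eventually_ge_atTop 1] with N hN hlamN
  have hN2 : (2 : ℝ) ≤ N := by exact_mod_cast hN
  have hNle : (N : ℝ) ≤ 2 / C * Real.exp ((l + 2) * lam N) := by
    have hexp : ((N : ℝ) - 1) * C ≤ Real.exp ((l + 2) * lam N) := by
      calc ((N : ℝ) - 1) * C
          = ((N : ℝ) - 1) * (C * Real.exp (-(l + 1) * lam N)) * Real.exp ((l + 1) * lam N) := by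
            rw [mul_assoc, mul_assoc, ← Real.exp_add, neg_mul, neg_add_cancel, Real.exp_zero,
              mul_one]
        _ ≤ Real.exp (lam N) * Real.exp ((l + 1) * lam N) := by
            gcongr
            linarith [hcount N (by omega), Real.add_one_le_exp (lam N)]
        _ = Real.exp ((l + 2) * lam N) := by rw [← Real.exp_add]; ring_nf
    rw [div_mul_eq_mul_div, le_div_iff₀ hC]
    nlinarith
  have hlog : Real.log N ≤ Real.log (2 / C) + (l + 2) * lam N := by
    calc Real.log N ≤ Real.log (2 / C * Real.exp ((l + 2) * lam N)) :=
          Real.log_le_log (by positivity) hNle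
      _ = _ := by rw [Real.log_mul (by positivity) (Real.exp_pos _).ne', Real.log_exp]
  rw [div_le_iff₀ (by linarith)]
  nlinarith [le_abs_self (Real.log (2 / C)), abs_nonneg (Real.log (2 / C))]

/-- `λ_n = √(log n)` is a frequency satisfying `(LC)` with
`limsup (log n)/λ_n = +∞`, so `(BC)` fails for it. -/
theorem sqrt_log_satisfies_LC_not_BC :
    IsFrequency (fun n : ℕ => Real.sqrt (Real.log n)) ∧
    LandauCondition (fun n : ℕ => Real.sqrt (Real.log n)) ∧
    ¬ IsBoundedUnder (· ≤ ·) atTop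
      (fun n : ℕ => Real.log n / Real.sqrt (Real.log n)) ∧
    ¬ BohrCondition (fun n : ℕ => Real.sqrt (Real.log n)) ∧
    (∃ C : ℝ, 0 < C ∧ ∀ n : ℕ, 1 ≤ n →
      C / (n : ℝ) ^ 2 ≤ Real.sqrt (Real.log (n + 1)) - Real.sqrt (Real.log n)) ∧
    Tendsto (fun n : ℕ =>
        (n : ℝ) ^ 2 * (Real.sqrt (Real.log (n + 1)) - Real.sqrt (Real.log n)))
      atTop atTop := by
  have hgap (n : ℕ) (hn : 1 ≤ n) :
      1 / 4 / (n : ℝ) ^ 2 ≤ √(Real.log (n + 1)) - √(Real.log n) :=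
    one_div_four_div_sq_le_sqrt_log_add_one_sub (by exact_mod_cast hn)
  have htends : Tendsto (fun n : ℕ => √(Real.log n)) atTop atTop :=
    tendsto_sqrt_atTop.comp (tendsto_log_atTop.comp tendsto_natCast_atTop_atTop)
  have hfreq : IsFrequency (fun n : ℕ => √(Real.log n)) := by
    refine ⟨fun n hn => ?_, by simp, htends⟩
    have : (0 : ℝ) < 1 / 4 / (n : ℝ) ^ 2 := by positivity
    push_cast
    linarith [hgap n hn]
  have hunbdd : ¬ IsBoundedUnder (· ≤ ·) atTop (fun n : ℕ => Real.log n / √(Real.log n)) := by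
    simp only [div_sqrt]
    exact not_isBoundedUnder_of_tendsto_atTop htends
  refine ⟨hfreq, ?_, hunbdd, fun hB => hunbdd (hB.isBoundedUnder_log_div hfreq),
    ⟨1 / 4, by norm_num, hgap⟩, ?_⟩
  · refine landauCondition_of_mul_exp_le_sub (a := 2) (c := 1 / 4) (by norm_num)
      (fun n _ => sqrt_nonneg _) fun n hn => ?_
    have hn' : (1 : ℝ) ≤ n := by exact_mod_cast hn
    rw [sq_sqrt (Real.log_nonneg hn'), Real.exp_neg, two_mul, Real.exp_add,
      Real.exp_log (by positivity), ← sq, ← div_eq_mul_inv, Nat.cast_succ]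
    exact hgap n hn
  · have hsqrt : Tendsto (fun n : ℕ => √(n : ℝ) / 4) atTop atTop :=
      (tendsto_sqrt_atTop.comp tendsto_natCast_atTop_atTop).atTop_div_const (by norm_num)
    refine tendsto_atTop_mono' atTop ?_ hsqrt
    filter_upwards [eventually_ge_atTop 1] with n hn
    exact sqrt_div_four_le_sq_mul_sqrt_log_add_one_sub (by exact_mod_cast hn)
end
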